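/- arXiv:1309.5991 — 3 statements merged into one kernel-verified Lean document; each statement's English description precedes it below -/
import Mathlib

section
/- Let I = [a,b] be a real interval and let F : I → ℝ be a positive function. Suppose Q is a finite set of pairwise non-overlapping closed subintervals covering I such that every J ∈ Q satisfies w(J) ≥ (1/2)·F(y) for all y ∈ J (where w(J) denotes the width of J). Then the cardinality of Q is at most ∫_I 2/F(x) dx. -/
/-!
Each interval `J = [p, q]` of the partition satisfies `F ≤ 2 (q - p)` on `J`, so `2 / F ≥ 1 / (q - p)`
there and `∫_J 2 / F ≥ 1`. The open intervals `(p, q)` are pairwise disjoint and lie in `[a, b]`,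
so summing over `Q` gives `#Q ≤ ∫_{[a,b]} 2 / F`.
-/

open MeasureTheory
open scoped ENNReal

theorem card_le_setLIntegral_of_pairwiseDisjoint {ι α : Type*} [MeasurableSpace α] {μ : Measure α}
    {f : α → ℝ≥0∞} {s : Set α} {Q : Finset ι} {A : ι → Set α}
    (hA : ∀ i ∈ Q, MeasurableSet (A i)) (hdisj : (Q : Set ι).PairwiseDisjoint A)
    (hsub : ∀ i ∈ Q, A i ⊆ s) (hone : ∀ i ∈ Q, 1 ≤ ∫⁻ x in A i, f x ∂μ) :
    (Q.card : ℝ≥0∞) ≤ ∫⁻ x in s, f x ∂μ :=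
  calc (Q.card : ℝ≥0∞) = ∑ _i ∈ Q, 1 := by simp
    _ ≤ ∑ i ∈ Q, ∫⁻ x in A i, f x ∂μ := Finset.sum_le_sum hone
    _ = ∫⁻ x in ⋃ i ∈ Q, A i, f x ∂μ := (lintegral_biUnion_finset hdisj hA f).symm
    _ ≤ ∫⁻ x in s, f x ∂μ := lintegral_mono_set (Set.iUnion₂_subset hsub)

theorem one_le_setLIntegral_Ioo_of_inv_width_le {p q : ℝ} {f : ℝ → ℝ} (hpq : p < q)
    (hf : ∀ x ∈ Set.Ioo p q, 1 / (q - p) ≤ f x) :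
    1 ≤ ∫⁻ x in Set.Ioo p q, ENNReal.ofReal (f x) :=
  calc (1 : ℝ≥0∞) = ENNReal.ofReal (1 / (q - p)) * volume (Set.Ioo p q) := by
        rw [Real.volume_Ioo, ← ENNReal.ofReal_mul (by positivity),
          one_div_mul_cancel (sub_pos.2 hpq).ne', ENNReal.ofReal_one]
    _ = ∫⁻ _ in Set.Ioo p q, ENNReal.ofReal (1 / (q - p)) := (setLIntegral_const _ _).symm
    _ ≤ ∫⁻ x in Set.Ioo p q, ENNReal.ofReal (f x) :=
        setLIntegral_mono' measurableSet_Ioo fun x hx => ENNReal.ofReal_le_ofReal (hf x hx)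

theorem continuous_amortization_1d_general
    (a b : ℝ) (F : ℝ → ℝ)
    (hF : ∀ x ∈ Set.Icc a b, 0 < F x)
    (Q : Finset (ℝ × ℝ))
    (hsub : ∀ J ∈ Q, J.1 ≤ J.2 ∧ Set.Icc J.1 J.2 ⊆ Set.Icc a b)
    (hdisj : ∀ J ∈ Q, ∀ K ∈ Q, J ≠ K →
      interior (Set.Icc J.1 J.2) ∩ interior (Set.Icc K.1 K.2) = ∅)
    (hstop : ∀ J ∈ Q, ∀ y ∈ Set.Icc J.1 J.2, J.2 - J.1 ≥ F y / 2) :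
    (Q.card : ENNReal) ≤ ∫⁻ x in Set.Icc a b, ENNReal.ofReal (2 / F x) := by
  have hpos : ∀ J ∈ Q, ∀ y ∈ Set.Icc J.1 J.2, 0 < F y := fun J hJ y hy => hF y ((hsub J hJ).2 hy)
  refine card_le_setLIntegral_of_pairwiseDisjoint (A := fun J => Set.Ioo J.1 J.2)
    (fun _ _ => measurableSet_Ioo) ?_
    (fun J hJ => Set.Ioo_subset_Icc_self.trans (hsub J hJ).2) fun J hJ => ?_
  · intro J hJ K hK hne
    simpa only [interior_Icc, Set.disjoint_iff_inter_eq_empty] using hdisj J hJ K hK hne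
  · have hleft : J.1 ∈ Set.Icc J.1 J.2 := Set.left_mem_Icc.2 (hsub J hJ).1
    have hwidth : 0 < J.2 - J.1 := by linarith [hstop J hJ _ hleft, hpos J hJ _ hleft]
    refine one_le_setLIntegral_Ioo_of_inv_width_le (sub_pos.1 hwidth) fun x hx => ?_
    have hx' := Set.Ioo_subset_Icc_self hx
    rw [div_le_div_iff₀ hwidth (hpos J hJ x hx')]
    linarith [hstop J hJ x hx']

theorem continuous_amortization_1d
    (a b : ℝ) (hab : a ≤ b) (F : ℝ → ℝ)
    (hF : ∀ x ∈ Set.Icc a b, 0 < F x)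
    (Q : Finset (ℝ × ℝ))
    (hsub : ∀ J ∈ Q, J.1 ≤ J.2 ∧ Set.Icc J.1 J.2 ⊆ Set.Icc a b)
    (hcover : Set.Icc a b ⊆ ⋃ J ∈ Q, Set.Icc J.1 J.2)
    (hdisj : ∀ J ∈ Q, ∀ K ∈ Q, J ≠ K →
      interior (Set.Icc J.1 J.2) ∩ interior (Set.Icc K.1 K.2) = ∅)
    (hstop : ∀ J ∈ Q, ∀ y ∈ Set.Icc J.1 J.2, J.2 - J.1 ≥ F y / 2) :
    (Q.card : ENNReal) ≤ ∫⁻ x in Set.Icc a b, ENNReal.ofReal (2 / F x) :=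
  continuous_amortization_1d_general a b F hF Q hsub hdisj hstop
end

section
/- Let I be a real interval, F : I → ℝ a positive function, and g : ℝ → ℝ a positive decreasing function. Suppose Q is a finite set of pairwise non-overlapping closed subintervals covering I such that every J ∈ Q satisfies w(J) ≥ (1/2)·F(y) for all y ∈ J. Then ∑_{J ∈ Q} g(w(J)) ≤ ∫_I 2·g(F(x)/2)/F(x) dx. -/
/-!
On a cell `J` of width `w`, `g w = ∫_J g w / w`. For `x ∈ J` the stopping condition gives
`F x / 2 ≤ w`, and since `g` is decreasing, `g w / w ≤ g (F x / 2) / (F x / 2) = 2 g (F x / 2) / F x`.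
Summing over the cells, whose interiors are disjoint, bounds the total cost by the integral.
-/

open MeasureTheory Set

theorem ENNReal.ofReal_sum_le {ι : Type*} (s : Finset ι) (f : ι → ℝ) :
    ENNReal.ofReal (∑ i ∈ s, f i) ≤ ∑ i ∈ s, ENNReal.ofReal (f i) :=
  Finset.le_sum_of_subadditive _ ENNReal.ofReal_zero.le (fun _ _ => ENNReal.ofReal_add_le) s f

theorem Antitone.ofReal_div_le_ofReal_div {g : ℝ → ℝ} (hg : Antitone g) {s t : ℝ}
    (hs : 0 < s) (hst : s ≤ t) : ENNReal.ofReal (g t / t) ≤ ENNReal.ofReal (g s / s) := by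
  rcases le_or_gt (g t) 0 with hgt | hgt
  · rw [ENNReal.ofReal_of_nonpos (div_nonpos_of_nonpos_of_nonneg hgt (hs.le.trans hst))]
    exact zero_le
  · exact ENNReal.ofReal_le_ofReal (div_le_div₀ (hgt.le.trans (hg hst)) (hg hst) hs hst)

theorem ofReal_le_setLIntegral_Ioo {u v y : ℝ} {φ : ℝ → ENNReal} (huv : u < v)
    (hφ : ∀ x ∈ Ioo u v, ENNReal.ofReal (y / (v - u)) ≤ φ x) :
    ENNReal.ofReal y ≤ ∫⁻ x in Ioo u v, φ x := by
  have hlen : 0 < v - u := sub_pos.2 huv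
  calc ENNReal.ofReal y = ENNReal.ofReal (y / (v - u)) * volume (Ioo u v) := by
        rw [Real.volume_Ioo, ← ENNReal.ofReal_mul' hlen.le, div_mul_cancel₀ _ hlen.ne']
    _ = ∫⁻ _ in Ioo u v, ENNReal.ofReal (y / (v - u)) := (setLIntegral_const _ _).symm
    _ ≤ ∫⁻ x in Ioo u v, φ x := setLIntegral_mono' measurableSet_Ioo hφ

theorem sum_setLIntegral_le_setLIntegral {α ι : Type*} [MeasurableSpace α] {μ : Measure α}
    {I : Finset ι} {t : ι → Set α} {s : Set α} (φ : α → ENNReal)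
    (ht : ∀ i ∈ I, MeasurableSet (t i)) (htd : (I : Set ι).PairwiseDisjoint t)
    (hts : ∀ i ∈ I, t i ⊆ s) :
    ∑ i ∈ I, ∫⁻ x in t i, φ x ∂μ ≤ ∫⁻ x in s, φ x ∂μ := by
  rw [← lintegral_biUnion_finset htd ht]
  exact lintegral_mono_set (iUnion₂_subset hts)

theorem continuous_amortization_cost_general
    (a b : ℝ) (F : ℝ → ℝ)
    (hF : ∀ x ∈ Set.Icc a b, 0 < F x)
    (g : ℝ → ℝ)
    (hgdec : ∀ s t : ℝ, s ≤ t → g t ≤ g s)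
    (Q : Finset (ℝ × ℝ))
    (hsub : ∀ J ∈ Q, J.1 ≤ J.2 ∧ Set.Icc J.1 J.2 ⊆ Set.Icc a b)
    (hdisj : ∀ J ∈ Q, ∀ K ∈ Q, J ≠ K →
      interior (Set.Icc J.1 J.2) ∩ interior (Set.Icc K.1 K.2) = ∅)
    (hstop : ∀ J ∈ Q, ∀ y ∈ Set.Icc J.1 J.2, J.2 - J.1 ≥ F y / 2) :
    ENNReal.ofReal (∑ J ∈ Q, g (J.2 - J.1)) ≤
      ∫⁻ x in Set.Icc a b, ENNReal.ofReal (2 * g (F x / 2) / F x) := by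
  have hg : Antitone g := fun s t hst => hgdec s t hst
  have hwidth : ∀ J ∈ Q, J.1 < J.2 := fun J hJ => by
    have hJ₁ : J.1 ∈ Icc J.1 J.2 := left_mem_Icc.2 (hsub J hJ).1
    linarith [hstop J hJ J.1 hJ₁, hF J.1 ((hsub J hJ).2 hJ₁)]
  have hcell : ∀ J ∈ Q, ENNReal.ofReal (g (J.2 - J.1)) ≤
      ∫⁻ x in Ioo J.1 J.2, ENNReal.ofReal (2 * g (F x / 2) / F x) := fun J hJ => by
    refine ofReal_le_setLIntegral_Ioo (hwidth J hJ) fun x hx => ?_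
    have hxJ := Ioo_subset_Icc_self hx
    rw [show 2 * g (F x / 2) / F x = g (F x / 2) / (F x / 2) by ring]
    exact hg.ofReal_div_le_ofReal_div (half_pos (hF x ((hsub J hJ).2 hxJ))) (hstop J hJ x hxJ)
  have hcells_disj : (Q : Set (ℝ × ℝ)).PairwiseDisjoint fun J => Ioo J.1 J.2 :=
    fun J hJ K hK hne => disjoint_iff_inter_eq_empty.2 <| by
      simpa only [interior_Icc] using hdisj J hJ K hK hne
  calc ENNReal.ofReal (∑ J ∈ Q, g (J.2 - J.1))
      ≤ ∑ J ∈ Q, ENNReal.ofReal (g (J.2 - J.1)) := ENNReal.ofReal_sum_le _ _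
    _ ≤ ∑ J ∈ Q, ∫⁻ x in Ioo J.1 J.2, ENNReal.ofReal (2 * g (F x / 2) / F x) :=
        Finset.sum_le_sum hcell
    _ ≤ ∫⁻ x in Icc a b, ENNReal.ofReal (2 * g (F x / 2) / F x) :=
        sum_setLIntegral_le_setLIntegral _ (fun _ _ => measurableSet_Ioo) hcells_disj
          fun J hJ => Ioo_subset_Icc_self.trans (hsub J hJ).2

theorem continuous_amortization_cost
    (a b : ℝ) (hab : a ≤ b) (F : ℝ → ℝ)
    (hF : ∀ x ∈ Set.Icc a b, 0 < F x)
    (g : ℝ → ℝ) (hgpos : ∀ t, 0 < g t)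
    (hgdec : ∀ s t : ℝ, s ≤ t → g t ≤ g s)
    (Q : Finset (ℝ × ℝ))
    (hsub : ∀ J ∈ Q, J.1 ≤ J.2 ∧ Set.Icc J.1 J.2 ⊆ Set.Icc a b)
    (hcover : Set.Icc a b ⊆ ⋃ J ∈ Q, Set.Icc J.1 J.2)
    (hdisj : ∀ J ∈ Q, ∀ K ∈ Q, J ≠ K →
      interior (Set.Icc J.1 J.2) ∩ interior (Set.Icc K.1 K.2) = ∅)
    (hstop : ∀ J ∈ Q, ∀ y ∈ Set.Icc J.1 J.2, J.2 - J.1 ≥ F y / 2) :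
    ENNReal.ofReal (∑ J ∈ Q, g (J.2 - J.1)) ≤
      ∫⁻ x in Set.Icc a b, ENNReal.ofReal (2 * g (F x / 2) / F x) :=
  continuous_amortization_cost_general a b F hF g hgdec Q hsub hdisj hstop
end

section
/- Let α ∈ ℂ with Im(α) ≠ 0 and let a < b be real numbers with a ≤ Re(α) ≤ b. Then −∫_a^{Re(α)} 3·ln(Re(α)−x+|α−x|)/|α−x| dx − ∫_{Re(α)}^{b} 3·ln(x−Re(α)+|α−x|)/|α−x| dx = 3·(ln|Im(α)|)² − (3/2)·(ln(b−Re(α)+|α−b|))² − (3/2)·(ln(Re(α)−a+|α−a|))². -/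
/-!
Since `d/dt log (t + √(t² + c²)) = 1 / √(t² + c²)` for `c ≠ 0`, the function
`log (t + √(t² + c²)) ^ 2 / 2` is an antiderivative of `log (t + √(t² + c²)) / √(t² + c²)`.
With `c = Im α` we have `‖α - x‖ = √((x - Re α)² + c²)`, so the substitutions `t = Re α - x` on
`[a, Re α]` and `t = x - Re α` on `[Re α, b]` turn both integrals into integrals of this function
from `0`, where the antiderivative takes the value `log |Im α| ^ 2 / 2`.
-/

open Real intervalIntegral

section LogAddSqrt

variable {c : ℝ}

lemma sqrt_sq_add_sq_pos (hc : c ≠ 0) (t : ℝ) : 0 < √(t ^ 2 + c ^ 2) := by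
  positivity

lemma abs_lt_sqrt_sq_add_sq (hc : c ≠ 0) (t : ℝ) : |t| < √(t ^ 2 + c ^ 2) := by
  rw [lt_sqrt (abs_nonneg t), sq_abs]
  have : 0 < c ^ 2 := by positivity
  linarith

lemma add_sqrt_sq_add_sq_pos (hc : c ≠ 0) (t : ℝ) : 0 < t + √(t ^ 2 + c ^ 2) := by
  linarith [abs_lt_sqrt_sq_add_sq hc t, neg_abs_le t]

lemma hasDerivAt_sqrt_sq_add_sq (hc : c ≠ 0) (t : ℝ) :
    HasDerivAt (fun t => √(t ^ 2 + c ^ 2)) (t / √(t ^ 2 + c ^ 2)) t := by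
  have hsq : HasDerivAt (fun t : ℝ => t ^ 2 + c ^ 2) (2 * t) t := by
    simpa using (hasDerivAt_pow 2 t).add_const (c ^ 2)
  convert hsq.sqrt (by positivity) using 1
  field_simp

lemma hasDerivAt_log_add_sqrt_sq_add_sq (hc : c ≠ 0) (t : ℝ) :
    HasDerivAt (fun t => log (t + √(t ^ 2 + c ^ 2))) (√(t ^ 2 + c ^ 2))⁻¹ t := by
  have hs := sqrt_sq_add_sq_pos hc t
  have hu := add_sqrt_sq_add_sq_pos hc t
  have hsum : HasDerivAt (fun t => t + √(t ^ 2 + c ^ 2)) (1 + t / √(t ^ 2 + c ^ 2)) t :=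
    (hasDerivAt_id' t).add (hasDerivAt_sqrt_sq_add_sq hc t)
  convert hsum.log hu.ne' using 1
  field_simp
  ring

lemma hasDerivAt_log_add_sqrt_sq_add_sq_sq (hc : c ≠ 0) (t : ℝ) :
    HasDerivAt (fun t => log (t + √(t ^ 2 + c ^ 2)) ^ 2 / 2)
      (log (t + √(t ^ 2 + c ^ 2)) / √(t ^ 2 + c ^ 2)) t := by
  refine (((hasDerivAt_log_add_sqrt_sq_add_sq hc t).fun_pow 2).div_const 2).congr_deriv ?_
  norm_num
  ring

lemma integral_log_add_sqrt_sq_add_sq_div (hc : c ≠ 0) (a b : ℝ) :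
    ∫ t in a..b, log (t + √(t ^ 2 + c ^ 2)) / √(t ^ 2 + c ^ 2) =
      (log (b + √(b ^ 2 + c ^ 2)) ^ 2 - log (a + √(a ^ 2 + c ^ 2)) ^ 2) / 2 := by
  have hlog : Continuous fun t => log (t + √(t ^ 2 + c ^ 2)) :=
    continuous_iff_continuousAt.2 fun t =>
      (hasDerivAt_log_add_sqrt_sq_add_sq hc t).continuousAt
  have hint : Continuous fun t => log (t + √(t ^ 2 + c ^ 2)) / √(t ^ 2 + c ^ 2) :=
    hlog.div (by fun_prop) fun t => (sqrt_sq_add_sq_pos hc t).ne'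
  rw [integral_eq_sub_of_hasDerivAt (fun t _ => hasDerivAt_log_add_sqrt_sq_add_sq_sq hc t)
    (hint.intervalIntegrable a b)]
  ring

end LogAddSqrt

lemma Complex.norm_sub_ofReal (α : ℂ) (x : ℝ) : ‖α - x‖ = √((x - α.re) ^ 2 + α.im ^ 2) := by
  rw [Complex.norm_def, Complex.normSq_apply]
  simp only [Complex.sub_re, Complex.sub_im, Complex.ofReal_re, Complex.ofReal_im]
  ring_nf

theorem sqfreeeval_bit_integral_complex_root_general
    (α : ℂ) (him : α.im ≠ 0) (a b : ℝ) :
    (-(∫ x in a..α.re,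
          3 * Real.log (α.re - x + ‖α - x‖) / ‖α - x‖) -
        ∫ x in α.re..b,
          3 * Real.log (x - α.re + ‖α - x‖) / ‖α - x‖) =
      3 * (Real.log |α.im|) ^ 2 -
        (3 / 2) * (Real.log (b - α.re + ‖α - b‖)) ^ 2 -
        (3 / 2) * (Real.log (α.re - a + ‖α - a‖)) ^ 2 := by
  set F := fun t => log (t + √(t ^ 2 + α.im ^ 2)) / √(t ^ 2 + α.im ^ 2)
  have hnorm_left (x : ℝ) : ‖α - x‖ = √((α.re - x) ^ 2 + α.im ^ 2) := by
    rw [Complex.norm_sub_ofReal, ← neg_sub, neg_sq]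
  have hleft : ∫ x in a..α.re, 3 * log (α.re - x + ‖α - x‖) / ‖α - x‖ =
      3 * ∫ t in 0..α.re - a, F t := by
    simp_rw [hnorm_left, mul_div_assoc, integral_const_mul]
    rw [integral_comp_sub_left F α.re, sub_self]
  have hright : ∫ x in α.re..b, 3 * log (x - α.re + ‖α - x‖) / ‖α - x‖ =
      3 * ∫ t in 0..b - α.re, F t := by
    simp_rw [Complex.norm_sub_ofReal, mul_div_assoc, integral_const_mul]
    rw [integral_comp_sub_right F α.re, sub_self]
  rw [hleft, hright, integral_log_add_sqrt_sq_add_sq_div him,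
    integral_log_add_sqrt_sq_add_sq_div him, hnorm_left a, Complex.norm_sub_ofReal α b]
  simp only [zero_pow two_ne_zero, zero_add, sqrt_sq_eq_abs]
  ring

theorem sqfreeeval_bit_integral_complex_root
    (α : ℂ) (him : α.im ≠ 0) (a b : ℝ) (hab : a < b)
    (ha : a ≤ α.re) (hb : α.re ≤ b) :
    (-(∫ x in a..α.re,
          3 * Real.log (α.re - x + ‖α - x‖) / ‖α - x‖) -
        ∫ x in α.re..b,
          3 * Real.log (x - α.re + ‖α - x‖) / ‖α - x‖) =
      3 * (Real.log |α.im|) ^ 2 -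
        (3 / 2) * (Real.log (b - α.re + ‖α - b‖)) ^ 2 -
        (3 / 2) * (Real.log (α.re - a + ‖α - a‖)) ^ 2 :=
  sqfreeeval_bit_integral_complex_root_general α him a b
end
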